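/- arXiv:2001.00659 — 5 statements merged into one kernel-verified Lean document; each statement's English description precedes it below -/
import Mathlib

section
/- Let G be an abelian, transitive subgroup of S_{2^n} that is not contained in the alternating group A_{2^n}. Then G is cyclic (generated by a 2^n-cycle). -/
/-!
A transitive abelian permutation group acts regularly: an element fixing one point commutes with
elements carrying that point anywhere, so it fixes every point. Hence `G` has order `2 ^ n`, and
every cycle of any `g ∈ G` has length `orderOf g`, since `g ^ k` fixing one point forces
`g ^ k = 1`. If `g` has `m` cycles then `m * orderOf g = 2 ^ n`, and `sign g = (-1) ^ (2 ^ n + m)`.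
An odd `g` therefore has an odd number `m` of cycles dividing `2 ^ n`, so it is a single
`2 ^ n`-cycle, whose order equals `|G|`.
-/

namespace Equiv.Perm

variable {α : Type*}

theorem eq_one_of_mem_of_apply_eq_self {G : Subgroup (Perm α)}
    (hab : ∀ g ∈ G, ∀ h ∈ G, g * h = h * g) (htrans : ∀ x y : α, ∃ g ∈ G, g x = y)
    {g : Perm α} (hg : g ∈ G) {x : α} (hx : g x = x) : g = 1 := by
  ext y
  obtain ⟨k, hk, rfl⟩ := htrans x y
  change (g * k) x = k x
  rw [hab g hg k hk, mul_apply, hx]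

theorem card_subgroup_eq_card_of_free {G : Subgroup (Perm α)}
    (hfree : ∀ g ∈ G, ∀ x, g x = x → g = 1) (htrans : ∀ x y : α, ∃ g ∈ G, g x = y) (x : α) :
    Nat.card G = Nat.card α := by
  refine Nat.card_eq_of_bijective (fun g : G ↦ (g : Perm α) x) ⟨?_, fun y ↦ ?_⟩
  · rintro ⟨g, hg⟩ ⟨h, hh⟩ (hgh : g x = h x)
    have hfix : (h⁻¹ * g) x = x := by simp [hgh]
    simpa [inv_mul_eq_one, eq_comm] using hfree _ (mul_mem (inv_mem hh) hg) x hfix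
  · obtain ⟨g, hg, rfl⟩ := htrans x y
    exact ⟨⟨g, hg⟩, rfl⟩

variable [Fintype α] [DecidableEq α]

theorem eq_orderOf_of_mem_cycleType {g : Perm α}
    (hfree : ∀ k : ℕ, ∀ x, (g ^ k) x = x → g ^ k = 1) {r : ℕ} (hr : r ∈ g.cycleType) :
    r = orderOf g := by
  obtain ⟨c, hc, rfl⟩ := Multiset.mem_map.mp hr
  obtain ⟨x, hx⟩ := (mem_cycleFactorsFinset_iff.mp hc).1.nonempty_support
  have hcx : g.cycleOf x = c := (cycle_is_cycleOf hx hc).symm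
  refine Nat.dvd_antisymm (dvd_of_mem_cycleType hr) (orderOf_dvd_of_pow_eq_one (hfree _ x ?_))
  simpa [hcx] using (pow_mod_card_support_cycleOf_self_apply g c.support.card x).symm

theorem isCycle_of_sign_eq_neg_one {g : Perm α} {n : ℕ} (hcard : g.support.card = 2 ^ n)
    (hcycles : ∀ r ∈ g.cycleType, r = orderOf g) (hsign : sign g = -1) : g.IsCycle := by
  set m := Multiset.card g.cycleType
  have hsum : m * orderOf g = 2 ^ n := by
    rw [← hcard, ← sum_cycleType, Multiset.eq_replicate_card.mpr hcycles, Multiset.sum_replicate,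
      smul_eq_mul]
  have hn : n ≠ 0 := by
    rintro rfl
    have hg1 : g ≠ 1 := by rintro rfl; simp at hsign
    have := two_le_card_support_of_ne_one hg1
    omega
  have hm_odd : Odd m := by
    have hparity : Odd (2 ^ n + m) := by
      rw [← Nat.not_even_iff_odd]
      intro heven
      have h := sign_of_cycleType g
      rw [hsign, sum_cycleType, hcard, heven.neg_one_pow] at h
      exact absurd h (by decide)
    exact (Nat.odd_add'.mp hparity).mpr ((Nat.even_pow' hn).mpr even_two)
  have hm : m = 1 := Nat.Coprime.eq_one_of_dvd (hm_odd.coprime_two_right.pow_right n)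
    (Dvd.intro _ hsum)
  exact card_cycleType_eq_one.mp hm

end Equiv.Perm

open Equiv Perm in
theorem stmt_3_general {n : ℕ} (G : Subgroup (Equiv.Perm (Fin (2 ^ n))))
    (hab : ∀ g ∈ G, ∀ h ∈ G, g * h = h * g)
    (htrans : ∀ x y : Fin (2 ^ n), ∃ g ∈ G, g x = y)
    (hodd : ∃ g ∈ G, Equiv.Perm.sign g = -1) :
    ∃ σ ∈ G, σ.IsCycle ∧ σ.support.card = 2 ^ n ∧ ∀ τ ∈ G, τ ∈ Subgroup.zpowers σ := by
  obtain ⟨g, hg, hsign⟩ := hodd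
  have hfree : ∀ h ∈ G, ∀ x, h x = x → h = 1 := fun h hh x ↦
    eq_one_of_mem_of_apply_eq_self hab htrans hh
  have hcardG : Nat.card G = 2 ^ n := by
    rw [card_subgroup_eq_card_of_free hfree htrans ⟨0, Nat.two_pow_pos n⟩, Nat.card_eq_fintype_card,
      Fintype.card_fin]
  have hg1 : g ≠ 1 := by rintro rfl; simp at hsign
  have hsupport : g.support.card = 2 ^ n := by
    rw [Finset.eq_univ_of_forall fun x ↦ mem_support.mpr fun hx ↦ hg1 (hfree g hg x hx),
      Finset.card_univ, Fintype.card_fin]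
  have hcycle : g.IsCycle := isCycle_of_sign_eq_neg_one hsupport
    (fun r ↦ eq_orderOf_of_mem_cycleType fun k ↦ hfree _ (pow_mem hg k)) hsign
  have hzpowers : Subgroup.zpowers g = G := by
    refine Subgroup.eq_of_le_of_card_ge (Subgroup.zpowers_le.mpr hg) ?_
    rw [hcardG, Nat.card_zpowers, hcycle.orderOf, hsupport]
  exact ⟨g, hg, hcycle, hsupport, fun τ hτ ↦ hzpowers ▸ hτ⟩

theorem stmt_3 {n : ℕ} (hn : 1 ≤ n) (G : Subgroup (Equiv.Perm (Fin (2 ^ n))))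
    (hab : ∀ g ∈ G, ∀ h ∈ G, g * h = h * g)
    (htrans : ∀ x y : Fin (2 ^ n), ∃ g ∈ G, g x = y)
    (hodd : ∃ g ∈ G, Equiv.Perm.sign g = -1) :
    ∃ σ ∈ G, σ.IsCycle ∧ σ.support.card = 2 ^ n ∧ ∀ τ ∈ G, τ ∈ Subgroup.zpowers σ :=
  stmt_3_general G hab htrans hodd
end

section
/- For a tamely ramified prime 𝔮 of L over 𝔭 in a Galois extension L/K, the map sending σ in the inertia group I(𝔮/𝔭) to the class of σ(π)/π modulo 𝔮, where π is a uniformizer for 𝔮, is a well-defined injective group homomorphism from I(𝔮/𝔭) to the multiplicative group (O_L/𝔮)^×. -/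
/-!
An element `σ` of the inertia group preserves `𝔮` and `𝔮²`. Since `𝔮/𝔮²` is spanned by `π`
over the residue field, `σ(π) ≡ c·π mod 𝔮²` for a residue class `c` determined by `σ`, and a
direct computation shows that `σ ↦ c` is multiplicative. If `c = 1`, then `σ - 1` raises
`𝔮`-adic valuations by at least one. A telescoping sum shows that `σ^p` raises them by one
more than `σ` does. The order of `σ` divides `|I| = e`, which is prime to `p`, so `σ` is a power
of `σ^p`. Hence `σ - 1` raises valuations by arbitrarily large amounts, and by Krull's
intersection theorem `σ = 1`.
-/

open NumberField Finset

namespace Ideal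

section Uniformizer

variable {S : Type*} [CommRing S] {𝔮 : Ideal S} {π : S}

theorem mul_mem_sq_iff [𝔮.IsMaximal] (hπ : π ∈ 𝔮) (hπ2 : π ∉ 𝔮 ^ 2) {c : S} :
    c * π ∈ 𝔮 ^ 2 ↔ c ∈ 𝔮 := by
  refine ⟨fun hc => by_contra fun hc' => hπ2 ?_, fun hc => sq 𝔮 ▸ mul_mem_mul hc hπ⟩
  obtain ⟨d, i, hi, hdi⟩ := IsMaximal.exists_inv ‹_› hc'
  have hπ' : π = d * (c * π) + i * π := by linear_combination (-π) * hdi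
  rw [hπ']
  exact add_mem (mul_mem_left _ d hc) (sq 𝔮 ▸ mul_mem_mul hi hπ)

theorem le_span_singleton_sup_sq [IsDedekindDomain S] [𝔮.IsPrime] (hπ : π ∈ 𝔮)
    (hπ2 : π ∉ 𝔮 ^ 2) : 𝔮 ≤ span {π} ⊔ 𝔮 ^ 2 := by
  have h𝔮 : 𝔮 ≠ ⊥ := by
    rintro rfl
    exact hπ2 (by simp_all)
  obtain ⟨i, hi, hI⟩ := (dvd_prime_pow ((prime_iff_isPrime h𝔮).2 ‹_›) 2).1
    (dvd_iff_le.2 (le_sup_right : 𝔮 ^ 2 ≤ span {π} ⊔ 𝔮 ^ 2))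
  rw [associated_iff_eq] at hI
  interval_cases i
  · simp [hI]
  · simp [hI]
  · exact absurd (hI ▸ Submodule.mem_sup_left (mem_span_singleton_self π)) hπ2

end Uniformizer

section RamificationSubmonoid

variable {S : Type*} (M : Type*) [CommRing S] [Monoid M] [MulSemiringAction M S] (𝔮 : Ideal S)

/-- The `σ` with `v_𝔮(σ • x - x) ≥ v_𝔮(x) + n` for all `x`: for a Galois action and `n ≥ 1`,
the lower ramification group `G_n`. -/
def ramificationSubmonoid (n : ℕ) : Submonoid M where
  carrier := {σ | ∀ k, ∀ x ∈ 𝔮 ^ k, σ • x - x ∈ 𝔮 ^ (k + n)}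
  one_mem' := by simp
  mul_mem' {σ τ} hσ hτ k x hx := by
    have hτx : τ • x ∈ 𝔮 ^ k := by
      simpa using add_mem (pow_le_pow_right (k.le_add_right n) (hτ k x hx)) hx
    simpa [mul_smul] using add_mem (hσ k _ hτx) (hτ k x hx)

variable {M 𝔮} {σ : M}

theorem smul_mem_pow_of_forall_smul_sub_mem (hσ : ∀ x, σ • x - x ∈ 𝔮) {k : ℕ} {x : S}
    (hx : x ∈ 𝔮 ^ k) : σ • x ∈ 𝔮 ^ k := by
  have h𝔮 : 𝔮 ≤ 𝔮.comap (MulSemiringAction.toRingHom M S σ) := fun y hy => by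
    simpa using add_mem (hσ y) hy
  exact le_comap_pow _ k (pow_right_mono h𝔮 k hx)

theorem mem_ramificationSubmonoid_of_forall {n : ℕ} (h₀ : ∀ x, σ • x - x ∈ 𝔮 ^ n)
    (h₁ : ∀ x ∈ 𝔮, σ • x - x ∈ 𝔮 ^ (n + 1)) : σ ∈ 𝔮.ramificationSubmonoid M n := by
  intro k
  induction k with
  | zero =>
    intro x _
    simpa using h₀ x
  | succ k ih =>
    intro x hx
    rw [pow_succ] at hx
    refine Submodule.mul_induction_on hx (fun a ha b hb => ?_) fun u v hu hv => ?_
    · have hσa : σ • a ∈ 𝔮 ^ k := by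
        simpa using add_mem (pow_le_pow_right (k.le_add_right n) (ih a ha)) ha
      have key : σ • (a * b) - a * b = σ • a * (σ • b - b) + (σ • a - a) * b := by
        rw [smul_mul']; ring
      rw [key]
      refine add_mem ?_ ?_
      · simpa [← pow_add, add_assoc, add_comm 1 n] using mul_mem_mul hσa (h₁ b hb)
      · simpa [← pow_succ, add_right_comm k 1 n] using mul_mem_mul (ih a ha) hb
    · rw [smul_add, add_sub_add_comm]
      exact add_mem hu hv

theorem mem_ramificationSubmonoid_one {π : S} (hπ : π ∈ 𝔮) (hgen : 𝔮 ≤ span {π} ⊔ 𝔮 ^ 2)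
    (hσ : ∀ x, σ • x - x ∈ 𝔮) (hσπ : σ • π - π ∈ 𝔮 ^ 2) : σ ∈ 𝔮.ramificationSubmonoid M 1 := by
  refine mem_ramificationSubmonoid_of_forall (by simpa using hσ) fun x hx => ?_
  obtain ⟨a, b, hb, rfl⟩ := mem_span_singleton_sup.1 (hgen hx)
  have key : σ • (a * π + b) - (a * π + b) =
      σ • a * (σ • π - π) + (σ • a - a) * π + (σ • b - b) := by
    rw [smul_add, smul_mul']; ring
  rw [key]
  exact add_mem (add_mem (mul_mem_left _ _ hσπ) (sq 𝔮 ▸ mul_mem_mul (hσ a) hπ))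
    (sub_mem (smul_mem_pow_of_forall_smul_sub_mem hσ hb) hb)

theorem pow_mem_ramificationSubmonoid_succ {p : ℕ} (hp : (p : S) ∈ 𝔮) {n : ℕ} (hn : n ≠ 0)
    (hσ : σ ∈ 𝔮.ramificationSubmonoid M n) : σ ^ p ∈ 𝔮.ramificationSubmonoid M (n + 1) := by
  intro k x hx
  set y := σ • x - x
  have hy : y ∈ 𝔮 ^ (k + n) := hσ k x hx
  -- `σ^p - 1 = ∑_{i<p} σ^i (σ - 1)`, and each `σ^i` acts trivially on `𝔮^(k+n) / 𝔮^(k+n+1)`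
  have htel : σ ^ p • x - x = p • y + ∑ i ∈ range p, (σ ^ i • y - y) := by
    rw [sum_sub_distrib, sum_const, card_range, add_sub_cancel]
    simpa [y, pow_succ, mul_smul, smul_sub] using (sum_range_sub (fun i => σ ^ i • x) p).symm
  rw [htel]
  refine add_mem ?_ (_root_.sum_mem fun i _ => ?_)
  · simpa [nsmul_eq_mul, ← pow_succ', add_assoc] using mul_mem_mul hp hy
  · exact pow_le_pow_right (by omega) (pow_mem hσ i (k + n) y hy)

theorem eq_one_of_mem_ramificationSubmonoid_one [IsNoetherianRing S] [IsDomain S]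
    [FaithfulSMul M S] (h𝔮 : 𝔮 ≠ ⊤) {p : ℕ} (hp : (p : S) ∈ 𝔮)
    (hσ : σ ∈ 𝔮.ramificationSubmonoid M 1) (hcop : p.Coprime (orderOf σ)) : σ = 1 := by
  obtain ⟨m, hm⟩ := exists_pow_eq_self_of_coprime hcop
  have hmem : ∀ n, σ ∈ 𝔮.ramificationSubmonoid M (n + 1) := by
    intro n
    induction n with
    | zero => exact hσ
    | succ n ih =>
      rw [← hm]
      exact pow_mem (pow_mem_ramificationSubmonoid_succ hp n.succ_ne_zero ih) m
  refine eq_of_smul_eq_smul (α := S) fun x => ?_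
  rw [one_smul, ← sub_eq_zero, ← mem_bot, ← iInf_pow_eq_bot_of_isDomain 𝔮 h𝔮, mem_iInf]
  intro n
  exact pow_le_pow_right n.le_succ (by simpa using hmem n 0 x (by simp))

end RamificationSubmonoid

section InertiaCharacter

variable {S G : Type*} [CommRing S] [Group G] [MulSemiringAction G S] {𝔮 : Ideal S} {π : S}

theorem exists_smul_sub_mul_mem_sq (hπ : π ∈ 𝔮) (hgen : 𝔮 ≤ span {π} ⊔ 𝔮 ^ 2) {σ : G}
    (hσ : σ ∈ 𝔮.inertia G) : ∃ c, σ • π - c * π ∈ 𝔮 ^ 2 := by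
  obtain ⟨c, b, hb, hcb⟩ := mem_span_singleton_sup.1 (hgen (by simpa using add_mem (hσ π) hπ))
  exact ⟨c, by rwa [← hcb, add_sub_cancel_left]⟩

theorem mul_smul_sub_mul_mul_mem_sq (hπ : π ∈ 𝔮) {σ τ : G} (hσ : σ ∈ 𝔮.inertia G) {c d : S}
    (hc : σ • π - c * π ∈ 𝔮 ^ 2) (hd : τ • π - d * π ∈ 𝔮 ^ 2) :
    (σ * τ) • π - c * d * π ∈ 𝔮 ^ 2 := by
  have key : (σ * τ) • π - c * d * π =
      σ • (τ • π - d * π) + σ • d * (σ • π - c * π) + c * π * (σ • d - d) := by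
    rw [mul_smul, smul_sub, smul_mul']; ring
  rw [key]
  exact add_mem (add_mem (smul_mem_pow_of_forall_smul_sub_mem hσ hd) (mul_mem_left _ _ hc))
    (sq 𝔮 ▸ mul_mem_mul (mul_mem_left _ c hπ) (hσ d))

variable [𝔮.IsMaximal]

theorem mk_eq_mk_iff_smul_sub_mul_mem_sq (hπ : π ∈ 𝔮) (hπ2 : π ∉ 𝔮 ^ 2) {σ : G} {c : S}
    (hc : σ • π - c * π ∈ 𝔮 ^ 2) (d : S) :
    Quotient.mk 𝔮 d = Quotient.mk 𝔮 c ↔ σ • π - d * π ∈ 𝔮 ^ 2 := by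
  rw [Quotient.mk_eq_mk_iff_sub_mem, ← mul_mem_sq_iff hπ hπ2,
    show σ • π - d * π = (σ • π - c * π) - (d - c) * π by ring, Submodule.sub_mem_iff_right _ hc]

/-- The class of `σ(π)/π` in the residue field. -/
noncomputable def inertiaCharacter (hπ : π ∈ 𝔮) (hπ2 : π ∉ 𝔮 ^ 2)
    (hgen : 𝔮 ≤ span {π} ⊔ 𝔮 ^ 2) : 𝔮.inertia G →* (S ⧸ 𝔮)ˣ :=
  MonoidHom.toHomUnits
    { toFun σ := Quotient.mk 𝔮 (exists_smul_sub_mul_mem_sq hπ hgen σ.2).choose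
      map_one' := by
        rw [← map_one (Quotient.mk 𝔮), eq_comm, mk_eq_mk_iff_smul_sub_mul_mem_sq hπ hπ2
          (exists_smul_sub_mul_mem_sq hπ hgen (1 : 𝔮.inertia G).2).choose_spec]
        simp
      map_mul' σ τ := by
        rw [← map_mul, eq_comm, mk_eq_mk_iff_smul_sub_mul_mem_sq hπ hπ2
          (exists_smul_sub_mul_mem_sq hπ hgen (σ * τ).2).choose_spec]
        exact mul_smul_sub_mul_mul_mem_sq hπ σ.2
          (exists_smul_sub_mul_mem_sq hπ hgen σ.2).choose_spec
          (exists_smul_sub_mul_mem_sq hπ hgen τ.2).choose_spec }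

theorem mk_eq_inertiaCharacter_iff (hπ : π ∈ 𝔮) (hπ2 : π ∉ 𝔮 ^ 2) (hgen : 𝔮 ≤ span {π} ⊔ 𝔮 ^ 2)
    (σ : 𝔮.inertia G) (c : S) :
    Quotient.mk 𝔮 c = inertiaCharacter hπ hπ2 hgen σ ↔ (σ : G) • π - c * π ∈ 𝔮 ^ 2 :=
  mk_eq_mk_iff_smul_sub_mul_mem_sq hπ hπ2 (exists_smul_sub_mul_mem_sq hπ hgen σ.2).choose_spec c

theorem inertiaCharacter_injective [IsNoetherianRing S] [IsDomain S] [FaithfulSMul G S]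
    (hπ : π ∈ 𝔮) (hπ2 : π ∉ 𝔮 ^ 2) (hgen : 𝔮 ≤ span {π} ⊔ 𝔮 ^ 2) {p : ℕ} (hp : (p : S) ∈ 𝔮)
    (htame : p.Coprime (Nat.card (𝔮.inertia G))) :
    Function.Injective (inertiaCharacter (G := G) hπ hπ2 hgen) := by
  refine (injective_iff_map_eq_one _).2 fun σ hσ => Subtype.ext ?_
  have hσπ : (σ : G) • π - π ∈ 𝔮 ^ 2 := by
    simpa using (mk_eq_inertiaCharacter_iff hπ hπ2 hgen σ 1).1 (by simp [hσ])
  exact eq_one_of_mem_ramificationSubmonoid_one (IsMaximal.ne_top ‹_›) hp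
    (mem_ramificationSubmonoid_one hπ hgen σ.2 hσπ)
    (htame.coprime_dvd_right (Subgroup.orderOf_dvd_natCard _ σ.2))

end InertiaCharacter

end Ideal

namespace NumberField

variable {K L : Type*} [Field K] [Field L] [NumberField K] [NumberField L] [Algebra K L]

instance [IsGalois K L] : IsGaloisGroup (𝓞 L ≃ₐ[𝓞 K] 𝓞 L) (𝓞 K) (𝓞 L) :=
  have := IsGaloisGroup.of_isFractionRing Gal(L/K) (𝓞 K) (𝓞 L) K L
  .of_mulEquiv (galRestrict (𝓞 K) K L (𝓞 L)).symm fun σ x => by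
    apply FaithfulSMul.algebraMap_injective (𝓞 L) L
    rw [algebraMap.smul', AlgEquiv.smul_def, ← algebraMap_galRestrict_apply (𝓞 K),
      MulEquiv.apply_symm_apply]
    rfl

theorem card_inertia_eq_ramificationIdx' [IsGalois K L] (𝔭 : Ideal (𝓞 K)) [𝔭.IsMaximal]
    (𝔮 : Ideal (𝓞 L)) [𝔮.IsPrime] [𝔮.LiesOver 𝔭] :
    Nat.card (𝔮.inertia (𝓞 L ≃ₐ[𝓞 K] 𝓞 L)) = 𝔭.ramificationIdx' 𝔮 := by
  rw [Ideal.card_inertia_eq_ramificationIdxIn 𝔭 𝔮,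
    Ideal.ramificationIdxIn_eq_ramificationIdx 𝔭 𝔮 (𝓞 L ≃ₐ[𝓞 K] 𝓞 L),
    Ideal.ramificationIdx'_eq_ramificationIdx']
  exact Ideal.map_ne_bot_of_ne_bot (Ideal.IsMaximal.ne_bot_of_isIntegral_int 𝔭)

end NumberField

theorem stmt_7_general {K L : Type*} [Field K] [Field L] [NumberField K] [NumberField L]
    [Algebra K L] [IsGalois K L]
    (𝔭 : Ideal (𝓞 K)) (𝔮 : Ideal (𝓞 L)) [𝔭.IsMaximal] [𝔮.IsMaximal]
    (hover : Ideal.comap (algebraMap (𝓞 K) (𝓞 L)) 𝔮 = 𝔭)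
    (htame : ¬ (ringChar ((𝓞 K) ⧸ 𝔭) ∣
      Ideal.ramificationIdx' 𝔭 𝔮))
    (π : 𝓞 L) (hπ : π ∈ 𝔮) (hπ2 : π ∉ 𝔮 ^ 2) :
    -- the inertia group, realized as automorphisms σ of `𝓞 L` over `𝓞 K` with
    -- σ(x) ≡ x mod 𝔮 for all x, admits an injective group homomorphism θ into
    -- ((𝓞 L)/𝔮)ˣ, where θ(σ) is the class of σ(π)/π, characterized by
    -- σ(π) ≡ c·π mod 𝔮² for any lift c of θ(σ).
    ∃ θ : {σ : (𝓞 L) ≃ₐ[𝓞 K] (𝓞 L) // ∀ x : 𝓞 L, σ x - x ∈ 𝔮} → ((𝓞 L) ⧸ 𝔮)ˣ,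
      Function.Injective θ ∧
      (∀ σ τ : {σ : (𝓞 L) ≃ₐ[𝓞 K] (𝓞 L) // ∀ x : 𝓞 L, σ x - x ∈ 𝔮},
        ∀ h : ∀ x : 𝓞 L, (σ.1 * τ.1) x - x ∈ 𝔮, θ ⟨σ.1 * τ.1, h⟩ = θ σ * θ τ) ∧
      (∀ σ : {σ : (𝓞 L) ≃ₐ[𝓞 K] (𝓞 L) // ∀ x : 𝓞 L, σ x - x ∈ 𝔮},
        ∀ c : 𝓞 L, Ideal.Quotient.mk 𝔮 c = (θ σ : (𝓞 L) ⧸ 𝔮) →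
          σ.1 π - c * π ∈ 𝔮 ^ 2) := by
  have : 𝔮.LiesOver 𝔭 := ⟨hover.symm⟩
  have hp : (ringChar (𝓞 K ⧸ 𝔭) : 𝓞 L) ∈ 𝔮 := by
    rw [← map_natCast (algebraMap (𝓞 K) (𝓞 L)), ← Ideal.mem_comap, hover,
      ← Ideal.Quotient.eq_zero_iff_mem, map_natCast]
    exact ringChar.Nat.cast_ringChar
  have hcop : (ringChar (𝓞 K ⧸ 𝔭)).Coprime (Nat.card (𝔮.inertia (𝓞 L ≃ₐ[𝓞 K] 𝓞 L))) := by
    rw [NumberField.card_inertia_eq_ramificationIdx' 𝔭 𝔮]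
    exact (CharP.prime_ringChar _).coprime_iff_not_dvd.2 htame
  let θ := Ideal.inertiaCharacter (G := 𝓞 L ≃ₐ[𝓞 K] 𝓞 L) hπ hπ2
    (Ideal.le_span_singleton_sup_sq hπ hπ2)
  refine ⟨fun σ => θ ⟨σ.1, σ.2⟩, fun σ τ hστ => ?_, fun σ τ _ => ?_, fun σ c hc => ?_⟩
  · exact Subtype.ext (congrArg Subtype.val (Ideal.inertiaCharacter_injective _ _ _ hp hcop hστ))
  · rw [← map_mul]
    exact congrArg θ (Subtype.ext rfl)
  · exact (Ideal.mk_eq_inertiaCharacter_iff _ _ _ ⟨σ.1, σ.2⟩ c).1 hc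

theorem stmt_7 {K L : Type*} [Field K] [Field L] [NumberField K] [NumberField L]
    [Algebra K L] [IsGalois K L]
    (𝔭 : Ideal (𝓞 K)) (𝔮 : Ideal (𝓞 L)) [𝔭.IsMaximal] [𝔮.IsMaximal] (h𝔮 : 𝔮 ≠ ⊥)
    (hover : Ideal.comap (algebraMap (𝓞 K) (𝓞 L)) 𝔮 = 𝔭)
    (htame : ¬ (ringChar ((𝓞 K) ⧸ 𝔭) ∣
      Ideal.ramificationIdx' 𝔭 𝔮))
    (π : 𝓞 L) (hπ : π ∈ 𝔮) (hπ2 : π ∉ 𝔮 ^ 2) :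
    -- the inertia group, realized as automorphisms σ of `𝓞 L` over `𝓞 K` with
    -- σ(x) ≡ x mod 𝔮 for all x, admits an injective group homomorphism θ into
    -- ((𝓞 L)/𝔮)ˣ, where θ(σ) is the class of σ(π)/π, characterized by
    -- σ(π) ≡ c·π mod 𝔮² for any lift c of θ(σ).
    ∃ θ : {σ : (𝓞 L) ≃ₐ[𝓞 K] (𝓞 L) // ∀ x : 𝓞 L, σ x - x ∈ 𝔮} → ((𝓞 L) ⧸ 𝔮)ˣ,
      Function.Injective θ ∧
      (∀ σ τ : {σ : (𝓞 L) ≃ₐ[𝓞 K] (𝓞 L) // ∀ x : 𝓞 L, σ x - x ∈ 𝔮},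
        ∀ h : ∀ x : 𝓞 L, (σ.1 * τ.1) x - x ∈ 𝔮, θ ⟨σ.1 * τ.1, h⟩ = θ σ * θ τ) ∧
      (∀ σ : {σ : (𝓞 L) ≃ₐ[𝓞 K] (𝓞 L) // ∀ x : 𝓞 L, σ x - x ∈ 𝔮},
        ∀ c : 𝓞 L, Ideal.Quotient.mk 𝔮 c = (θ σ : (𝓞 L) ⧸ 𝔮) →
          σ.1 π - c * π ∈ 𝔮 ^ 2) :=
  stmt_7_general 𝔭 𝔮 hover htame π hπ hπ2
end

section
/- Let m ≥ 2, let ζ be a primitive 2^m-th root of unity, and let σ be the nontrivial element of Gal(Q(ζ_{2^m})/Q(ζ_{2^{m-1}})); so σ(ζ) = −ζ. Then for every x ∈ Z[ζ] and every place v of Q(ζ_{2^m}) lying over 2, one has |σ(x)² − x²|_v ≤ 1/4. -/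
/-!
An absolute value with `v 2 ≤ 1` is bounded by `1` on the integers (Ostrowski), hence
nonarchimedean, hence bounded by `1` on `ℤ[ζ]`, since `v ζ = 1`. As `σ` fixes `ℤ` and negates `ζ`,
it acts trivially on `ℤ[ζ] / 2`: `σ x = x + 2c` with `c ∈ ℤ[ζ]`, so
`σ x ^ 2 - x ^ 2 = 4 c (x + c)` has absolute value at most `v 4 = 1 / 4`.
-/

namespace AbsoluteValue

variable {K : Type*} [Field K] (v : AbsoluteValue K ℝ)

theorem natCast_le_one_of_apply_two_le_one [CharZero K] (h2 : v 2 ≤ 1) (n : ℕ) : v n ≤ 1 := by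
  let w : AbsoluteValue ℚ ℝ := v.comp (Rat.castHom K).injective
  have hw : ∀ k : ℕ, w k = v k := fun k => congrArg v (map_natCast (Rat.castHom K) k)
  by_contra hn
  have h2w := Rat.AbsoluteValue.one_lt_of_not_bounded (f := w) (fun h => hn (hw n ▸ h n))
    one_lt_two
  rw [hw, Nat.cast_ofNat] at h2w
  linarith

theorem isNonarchimedean_of_natCast_le_one (h : ∀ n : ℕ, v n ≤ 1) : IsNonarchimedean v := by
  have : IsUltrametricDist (WithAbs v) :=
    IsUltrametricDist.isUltrametricDist_of_forall_norm_natCast_le_one fun n => h n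
  intro x y
  exact IsUltrametricDist.norm_add_le_max (WithAbs.toAbs v x) (WithAbs.toAbs v y)

theorem apply_eq_one_of_pow_eq_one {x : K} {n : ℕ} (hx : x ^ n = 1) (hn : n ≠ 0) : v x = 1 :=
  (pow_eq_one_iff_of_nonneg (v.nonneg x) hn).mp (by rw [← map_pow, hx, map_one])

end AbsoluteValue

theorem IsNonarchimedean.apply_le_one_of_mem_adjoin {R : Type*} [CommRing R] [Nontrivial R]
    {v : AbsoluteValue R ℝ} (hv : IsNonarchimedean v) {s : Set R} (hs : ∀ z ∈ s, v z ≤ 1)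
    {y : R} (hy : y ∈ Algebra.adjoin ℤ s) : v y ≤ 1 := by
  induction hy using Algebra.adjoin_induction with
  | mem z hz => exact hs z hz
  | algebraMap r => simpa using hv.apply_intCast_le_one (n := r)
  | add a b _ _ ha hb => exact (hv a b).trans (max_le ha hb)
  | mul a b _ _ ha hb => simpa [map_mul] using mul_le_one₀ ha (v.nonneg b) hb

theorem exists_apply_eq_add_two_mul_of_mem_adjoin {A : Type*} [CommRing A] (σ : A →+* A) {ζ : A}
    (hσ : σ ζ = -ζ) {y : A} (hy : y ∈ Algebra.adjoin ℤ {ζ}) :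
    ∃ c ∈ Algebra.adjoin ℤ {ζ}, σ y = y + 2 * c := by
  have two_mem : (2 : A) ∈ Algebra.adjoin ℤ {ζ} := ofNat_mem _ 2
  induction hy using Algebra.adjoin_induction with
  | mem z hz =>
    rw [Set.mem_singleton_iff.mp hz]
    exact ⟨-ζ, neg_mem (Algebra.subset_adjoin rfl), by rw [hσ]; ring⟩
  | algebraMap r => exact ⟨0, zero_mem _, by simp⟩
  | add a b _ _ ha hb =>
    obtain ⟨ca, hca, ha⟩ := ha
    obtain ⟨cb, hcb, hb⟩ := hb
    exact ⟨ca + cb, add_mem hca hcb, by rw [map_add, ha, hb]; ring⟩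
  | mul a b haS hbS ha hb =>
    obtain ⟨ca, hca, ha⟩ := ha
    obtain ⟨cb, hcb, hb⟩ := hb
    refine ⟨a * cb + ca * b + 2 * (ca * cb), ?_, by rw [map_mul, ha, hb]; ring⟩
    exact add_mem (add_mem (mul_mem haS hcb) (mul_mem hca hbS))
      (mul_mem two_mem (mul_mem hca hcb))

theorem stmt_11_general (m : ℕ)
    (ζ : CyclotomicField (2 ^ m : ℕ+) ℚ) (hζ : IsPrimitiveRoot ζ (2 ^ m))
    (σ : CyclotomicField (2 ^ m : ℕ+) ℚ ≃ₐ[ℚ] CyclotomicField (2 ^ m : ℕ+) ℚ)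
    (hσ : σ ζ = -ζ)
    (x : CyclotomicField (2 ^ m : ℕ+) ℚ) (hx : x ∈ Algebra.adjoin ℤ {ζ})
    (v : AbsoluteValue (CyclotomicField (2 ^ m : ℕ+) ℚ) ℝ) (hv : v 2 = 1 / 2) :
    v (σ x ^ 2 - x ^ 2) ≤ 1 / 4 := by
  have hna : IsNonarchimedean v := v.isNonarchimedean_of_natCast_le_one
    (v.natCast_le_one_of_apply_two_le_one (by rw [hv]; norm_num))
  have hζ1 : v ζ = 1 := v.apply_eq_one_of_pow_eq_one hζ.pow_eq_one (by positivity)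
  have hint : ∀ y ∈ Algebra.adjoin ℤ {ζ}, v y ≤ 1 := fun y hy =>
    hna.apply_le_one_of_mem_adjoin (fun _ hz => (hz ▸ hζ1).le) hy
  obtain ⟨c, hc, hσx⟩ := exists_apply_eq_add_two_mul_of_mem_adjoin (σ : _ →+* _) hσ hx
  calc v (σ x ^ 2 - x ^ 2) = v 2 * v 2 * (v c * v (x + c)) := by
        rw [show σ x ^ 2 - x ^ 2 = 2 * 2 * (c * (x + c)) by rw [← RingHom.coe_coe σ, hσx]; ring]
        simp only [map_mul]
    _ ≤ 1 / 2 * (1 / 2) * (1 * 1) := by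
        rw [hv]
        gcongr
        exacts [hint c hc, hint _ (add_mem hx hc)]
    _ = 1 / 4 := by norm_num

theorem stmt_11 (m : ℕ) (hm : 2 ≤ m)
    (ζ : CyclotomicField (2 ^ m : ℕ+) ℚ) (hζ : IsPrimitiveRoot ζ (2 ^ m))
    (σ : CyclotomicField (2 ^ m : ℕ+) ℚ ≃ₐ[ℚ] CyclotomicField (2 ^ m : ℕ+) ℚ)
    (hσ : σ ζ = -ζ)
    (x : CyclotomicField (2 ^ m : ℕ+) ℚ) (hx : x ∈ Algebra.adjoin ℤ {ζ})
    (v : AbsoluteValue (CyclotomicField (2 ^ m : ℕ+) ℚ) ℝ) (hv : v 2 = 1 / 2) :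
    v (σ x ^ 2 - x ^ 2) ≤ 1 / 4 :=
  stmt_11_general m ζ hζ σ hσ x hx v hv
end

section
/- Let φ(x) = x² + c with c ∈ ℂ, T = (1 + √(1 + 4|c|))/2, and N ≥ 1. Then for every x ∈ ℂ, |x · φ(x) · φ²(x) ⋯ φ^N(x)| ≤ T^N (1 + |φ^N(x)|²). -/
/-!
Let `f z = z ^ 2 + c` and let `T ≥ 1` with `T + ‖c‖ ≤ T ^ 2`. The region `‖z‖ ≥ T` is forward
invariant, and on it `‖z‖ ^ 2 ≤ T ‖f z‖`; telescoping gives `‖z f(z) ⋯ fⁿ(z)‖ ≤ Tⁿ ‖fⁿ(z)‖ ^ 2`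
for an orbit starting there. An orbit starting inside the disc contributes a factor `‖z‖ < T`
and the bound for `f z` takes over by induction on `n`.
-/

open Finset

variable {K : Type*} [NormedField K]

lemma norm_sq_sub_norm_le_norm_sq_add (w c : K) : ‖w‖ ^ 2 - ‖c‖ ≤ ‖w ^ 2 + c‖ := by
  have h := norm_sub_le (w ^ 2 + c) c
  rw [add_sub_cancel_right, norm_pow] at h
  linarith

lemma le_norm_sq_add_of_le_norm {c z : K} {T : ℝ} (hT : 0 ≤ T) (hTc : T + ‖c‖ ≤ T ^ 2)
    (hz : T ≤ ‖z‖) : T ≤ ‖z ^ 2 + c‖ := by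
  nlinarith [norm_sq_sub_norm_le_norm_sq_add z c]

lemma le_norm_iterate_of_le_norm {c z : K} {T : ℝ} (hT : 0 ≤ T) (hTc : T + ‖c‖ ≤ T ^ 2)
    (hz : T ≤ ‖z‖) (n : ℕ) : T ≤ ‖(· ^ 2 + c)^[n] z‖ := by
  induction n with
  | zero => exact hz
  | succ n ih =>
    rw [Function.iterate_succ_apply']
    exact le_norm_sq_add_of_le_norm hT hTc ih

lemma norm_sq_le_mul_norm_sq_add {c z : K} {T : ℝ} (hT : 1 ≤ T) (hTc : T + ‖c‖ ≤ T ^ 2)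
    (hz : T ≤ ‖z‖) : ‖z‖ ^ 2 ≤ T * ‖z ^ 2 + c‖ := by
  have hlow := norm_sq_sub_norm_le_norm_sq_add z c
  have hz2 : T ^ 2 ≤ ‖z‖ ^ 2 := pow_le_pow_left₀ (by linarith) hz 2
  nlinarith [mul_le_mul_of_nonneg_left hlow (by linarith : (0 : ℝ) ≤ T),
    mul_nonneg (sub_nonneg.2 hT) (sub_nonneg.2 hz2)]

lemma norm_prod_iterate_le_of_le_norm {c z : K} {T : ℝ} (hT : 1 ≤ T)
    (hTc : T + ‖c‖ ≤ T ^ 2) (hz : T ≤ ‖z‖) (n : ℕ) :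
    ‖∏ i ∈ range (n + 1), (· ^ 2 + c)^[i] z‖ ≤ T ^ n * ‖(· ^ 2 + c)^[n] z‖ ^ 2 := by
  induction n with
  | zero => simpa [sq] using le_mul_of_one_le_left (norm_nonneg z) (hT.trans hz)
  | succ n ih =>
    set w := (· ^ 2 + c)^[n] z
    have hstep : ‖w‖ ^ 2 ≤ T * ‖w ^ 2 + c‖ :=
      norm_sq_le_mul_norm_sq_add hT hTc (le_norm_iterate_of_le_norm (by linarith) hTc hz n)
    rw [prod_range_succ, norm_mul, Function.iterate_succ_apply']
    calc ‖∏ i ∈ range (n + 1), (· ^ 2 + c)^[i] z‖ * ‖w ^ 2 + c‖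
        ≤ T ^ n * ‖w‖ ^ 2 * ‖w ^ 2 + c‖ := by gcongr
      _ ≤ T ^ n * (T * ‖w ^ 2 + c‖) * ‖w ^ 2 + c‖ := by gcongr
      _ = T ^ (n + 1) * ‖w ^ 2 + c‖ ^ 2 := by ring

lemma norm_prod_iterate_le {c : K} {T : ℝ} (hT : 1 ≤ T) (hTc : T + ‖c‖ ≤ T ^ 2)
    (n : ℕ) (z : K) :
    ‖∏ i ∈ range (n + 1), (· ^ 2 + c)^[i] z‖ ≤ T ^ n * (1 + ‖(· ^ 2 + c)^[n] z‖ ^ 2) := by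
  induction n generalizing z with
  | zero => simpa using (two_mul_le_add_sq 1 ‖z‖).trans' (by linarith [norm_nonneg z])
  | succ n ih =>
    by_cases hz : T ≤ ‖z‖
    · calc _ ≤ T ^ (n + 1) * ‖(· ^ 2 + c)^[n + 1] z‖ ^ 2 :=
            norm_prod_iterate_le_of_le_norm hT hTc hz (n + 1)
        _ ≤ _ := by gcongr; linarith
    · rw [prod_range_succ', Function.iterate_zero_apply, norm_mul]
      simp_rw [Function.iterate_succ_apply]
      calc _ ≤ T ^ n * (1 + ‖(· ^ 2 + c)^[n] (z ^ 2 + c)‖ ^ 2) * T := by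
            gcongr
            · exact ih _
            · exact (not_le.1 hz).le
        _ = _ := by ring

lemma one_le_and_add_norm_le_sq_of_eq {c : K} {T : ℝ}
    (hT : T = (1 + Real.sqrt (1 + 4 * ‖c‖)) / 2) : 1 ≤ T ∧ T + ‖c‖ ≤ T ^ 2 := by
  have hs : Real.sqrt (1 + 4 * ‖c‖) ^ 2 = 1 + 4 * ‖c‖ := Real.sq_sqrt (by positivity)
  have hs1 : 1 ≤ Real.sqrt (1 + 4 * ‖c‖) :=
    Real.one_le_sqrt.2 (by linarith [norm_nonneg c])
  subst hT
  constructor <;> nlinarith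

theorem stmt_16_general (c : ℂ) (T : ℝ)
    (hT : T = (1 + Real.sqrt (1 + 4 * ‖c‖)) / 2)
    (N : ℕ) (x : ℂ) :
    ‖∏ i ∈ Finset.range (N + 1), (fun z : ℂ => z ^ 2 + c)^[i] x‖ ≤
      T ^ N * (1 + ‖(fun z : ℂ => z ^ 2 + c)^[N] x‖ ^ 2) := by
  obtain ⟨hT1, hTc⟩ := one_le_and_add_norm_le_sq_of_eq hT
  exact norm_prod_iterate_le hT1 hTc N x

theorem stmt_16 (c : ℂ) (T : ℝ)
    (hT : T = (1 + Real.sqrt (1 + 4 * ‖c‖)) / 2)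
    (N : ℕ) (hN : 1 ≤ N) (x : ℂ) :
    ‖∏ i ∈ Finset.range (N + 1), (fun z : ℂ => z ^ 2 + c)^[i] x‖ ≤
      T ^ N * (1 + ‖(fun z : ℂ => z ^ 2 + c)^[N] x‖ ^ 2) :=
  stmt_16_general c T hT N x
end

section
/- Let φ(x) = x² + c with c ∈ ℂ and N ≥ 1. Then the derivative of the N-th iterate satisfies (φ^N)′(x) = 2^N · x · φ(x) · φ²(x) ⋯ φ^{N−1}(x), and hence |φ^N(x)| · |(φ^N)′(x)| ≤ 2^N T^N (1 + |φ^N(x)|²) where T = (1 + √(1+4|c|))/2. -/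
/-!
By the chain rule, `(φ^[N])' = 2^N · ∏_{i<N} φ^[i]`. For the bound, write `aᵢ = |φ^[i](x)|`;
the reverse triangle inequality gives `aᵢ² - |c| ≤ aᵢ₊₁`, and `T` is the larger root of
`T² - T = |c|`. An `aᵢ ≤ T` contributes at most `T` to the product, while once `aᵢ > T` the
orbit escapes and `aᵢ² ≤ T aᵢ₊₁`, so the squares telescope. Both cases are covered by the
invariant `T · a₀ ⋯ aₙ ≤ Tⁿ · max (T aₙ) aₙ²`, which gives `a₀ ⋯ a_N ≤ T^N (1 + a_N²)`.
-/

open Finset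

theorem hasDerivAt_iterate_sq_add {𝕜 : Type*} [NontriviallyNormedField 𝕜] (c : 𝕜) (N : ℕ)
    (x : 𝕜) :
    HasDerivAt (fun z : 𝕜 => z ^ 2 + c)^[N]
      (2 ^ N * ∏ i ∈ range N, (fun z : 𝕜 => z ^ 2 + c)^[i] x) x := by
  induction N with
  | zero => simpa using hasDerivAt_id x
  | succ n ih =>
    rw [Function.iterate_succ']
    have hsq := (hasDerivAt_pow 2 ((fun z : 𝕜 => z ^ 2 + c)^[n] x)).add_const c
    refine (hsq.comp x ih).congr_deriv ?_
    rw [prod_range_succ]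
    ring

theorem one_le_one_add_sqrt_one_add_four_mul_div_two {r : ℝ} (hr : 0 ≤ r) :
    1 ≤ (1 + √(1 + 4 * r)) / 2 := by
  have : 1 ≤ √(1 + 4 * r) := Real.one_le_sqrt.mpr (by linarith)
  linarith

theorem one_add_sqrt_one_add_four_mul_div_two_sq_sub_self {r : ℝ} (hr : 0 ≤ r) :
    ((1 + √(1 + 4 * r)) / 2) ^ 2 - (1 + √(1 + 4 * r)) / 2 = r := by
  have := Real.sq_sqrt (show 0 ≤ 1 + 4 * r by linarith)
  linear_combination this / 4

section EscapeBound

variable {T : ℝ}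

theorem mul_max_le_of_sq_sub_le (hT : 1 ≤ T) {s t : ℝ} (hs : 0 ≤ s) (ht : 0 ≤ t)
    (hst : s ^ 2 - (T ^ 2 - T) ≤ t) :
    t * max (T * s) (s ^ 2) ≤ T * max (T * t) (t ^ 2) := by
  rcases le_or_gt s T with hsT | hsT
  · have hmax : max (T * s) (s ^ 2) = T * s := max_eq_left (by nlinarith)
    rw [hmax]
    calc t * (T * s) ≤ T * (T * t) := by
          nlinarith [mul_le_mul_of_nonneg_left hsT (mul_nonneg ht (by linarith : (0 : ℝ) ≤ T))]
      _ ≤ T * max (T * t) (t ^ 2) := by gcongr; exact le_max_left _ _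
  · -- `T t ≥ T s² - T³ + T²`, and this is `≥ s²` because `(T - 1)(s² - T²) ≥ 0`
    have hsq : s ^ 2 ≤ T * t := by nlinarith [mul_nonneg (sub_nonneg.2 hT) (sub_nonneg.2 hsT.le)]
    have hmax : max (T * s) (s ^ 2) = s ^ 2 := max_eq_right (by nlinarith)
    rw [hmax]
    calc t * s ^ 2 ≤ T * t ^ 2 := by nlinarith
      _ ≤ T * max (T * t) (t ^ 2) := by gcongr; exact le_max_right _ _

variable {a : ℕ → ℝ}

theorem mul_prod_range_succ_le_of_sq_sub_le (hT : 1 ≤ T) (ha : ∀ i, 0 ≤ a i)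
    (hstep : ∀ i, a i ^ 2 - (T ^ 2 - T) ≤ a (i + 1)) (n : ℕ) :
    T * ∏ i ∈ range (n + 1), a i ≤ T ^ n * max (T * a n) (a n ^ 2) := by
  induction n with
  | zero => simp
  | succ n ih =>
    calc T * ∏ i ∈ range (n + 2), a i = (T * ∏ i ∈ range (n + 1), a i) * a (n + 1) := by
          rw [prod_range_succ]; ring
      _ ≤ T ^ n * max (T * a n) (a n ^ 2) * a (n + 1) := by gcongr; exact ha _
      _ = T ^ n * (a (n + 1) * max (T * a n) (a n ^ 2)) := by ring
      _ ≤ T ^ n * (T * max (T * a (n + 1)) (a (n + 1) ^ 2)) :=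
          mul_le_mul_of_nonneg_left (mul_max_le_of_sq_sub_le hT (ha n) (ha _) (hstep n))
            (by positivity)
      _ = T ^ (n + 1) * max (T * a (n + 1)) (a (n + 1) ^ 2) := by ring

theorem prod_range_succ_le_of_sq_sub_le (hT : 1 ≤ T) (ha : ∀ i, 0 ≤ a i)
    (hstep : ∀ i, a i ^ 2 - (T ^ 2 - T) ≤ a (i + 1)) (n : ℕ) :
    ∏ i ∈ range (n + 1), a i ≤ T ^ n * (1 + a n ^ 2) := by
  have hmax : max (T * a n) (a n ^ 2) ≤ T * (1 + a n ^ 2) :=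
    max_le (mul_le_mul_of_nonneg_left (by nlinarith [sq_nonneg (a n - 1)]) (by positivity))
      (by nlinarith [sq_nonneg (a n)])
  have h := (mul_prod_range_succ_le_of_sq_sub_le hT ha hstep n).trans
    (mul_le_mul_of_nonneg_left hmax (by positivity))
  refine le_of_mul_le_mul_left ?_ (by linarith : 0 < T)
  linarith

end EscapeBound

theorem stmt_17_general (c : ℂ) (T : ℝ)
    (hT : T = (1 + Real.sqrt (1 + 4 * ‖c‖)) / 2)
    (N : ℕ) (x : ℂ) :
    deriv ((fun z : ℂ => z ^ 2 + c)^[N]) x =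
      2 ^ N * ∏ i ∈ Finset.range N, (fun z : ℂ => z ^ 2 + c)^[i] x ∧
    ‖(fun z : ℂ => z ^ 2 + c)^[N] x‖ *
        ‖deriv ((fun z : ℂ => z ^ 2 + c)^[N]) x‖ ≤
      2 ^ N * T ^ N * (1 + ‖(fun z : ℂ => z ^ 2 + c)^[N] x‖ ^ 2) := by
  have hderiv := hasDerivAt_iterate_sq_add c N x
  refine ⟨hderiv.deriv, ?_⟩
  have hT1 : 1 ≤ T := hT ▸ one_le_one_add_sqrt_one_add_four_mul_div_two (norm_nonneg c)
  have hc : T ^ 2 - T = ‖c‖ :=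
    hT ▸ one_add_sqrt_one_add_four_mul_div_two_sq_sub_self (norm_nonneg c)
  have hprod := prod_range_succ_le_of_sq_sub_le hT1
    (a := fun i => ‖(fun z : ℂ => z ^ 2 + c)^[i] x‖) (fun _ => norm_nonneg _)
    (fun i => by
      rw [hc, Function.iterate_succ_apply', ← norm_pow]
      exact norm_sub_le_norm_add _ c) N
  rw [prod_range_succ, mul_comm] at hprod
  rw [hderiv.deriv, norm_mul, norm_pow, Complex.norm_two, norm_prod, mul_left_comm,
    mul_assoc]
  gcongr

theorem stmt_17 (c : ℂ) (T : ℝ)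
    (hT : T = (1 + Real.sqrt (1 + 4 * ‖c‖)) / 2)
    (N : ℕ) (hN : 1 ≤ N) (x : ℂ) :
    deriv ((fun z : ℂ => z ^ 2 + c)^[N]) x =
      2 ^ N * ∏ i ∈ Finset.range N, (fun z : ℂ => z ^ 2 + c)^[i] x ∧
    ‖(fun z : ℂ => z ^ 2 + c)^[N] x‖ *
        ‖deriv ((fun z : ℂ => z ^ 2 + c)^[N]) x‖ ≤
      2 ^ N * T ^ N * (1 + ‖(fun z : ℂ => z ^ 2 + c)^[N] x‖ ^ 2) :=
  stmt_17_general c T hT N x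
end
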